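/- Define f * g := Σ_{k=0}^{m} g^{(k)}(0) f^{(m−k)} for polynomials f, g of the same degree m > 0. For f, g in P_n with deg f = m and deg g = n, one has f * (D^{n−m} g) = f ⋆ g. -/

import Mathlib

open Polynomial

/-- `P n` is the space of complex polynomials of degree at most `n`. -/
noncomputable def Pn (n : ℕ) : Submodule ℂ (Polynomial ℂ) := Polynomial.degreeLT ℂ (n + 1)

noncomputable instance instPnEndAddCommGroup (n : ℕ) : AddCommGroup (Module.End ℂ (Pn n)) :=
  LinearMap.addCommGroup

noncomputable instance instPnEndRing (n : ℕ) : Ring (Module.End ℂ (Pn n)) := Module.End.instRing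

/-- The differentiation operator on `Pn n`. -/
noncomputable def Dop (n : ℕ) : Module.End ℂ (Pn n) :=
  (Polynomial.derivative (R := ℂ)).restrict (p := Pn n) (q := Pn n)
    (fun f hf => by
      simp only [Pn, Polynomial.mem_degreeLT] at *
      exact lt_of_le_of_lt (Polynomial.degree_derivative_le) hf)

/-- `calD n` is the span of `I, D, D^2, ..., D^n` in `L(Pn n)`. -/
noncomputable def calD (n : ℕ) : Submodule ℂ (Module.End ℂ (Pn n)) :=
  Submodule.span ℂ (Set.range fun k : Fin (n + 1) => (Dop n) ^ (k : ℕ))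

/-- `φ_k(z) = z^k / k!` as an element of `Pn n` (for `k ≤ n`). -/
noncomputable def phiP (n k : ℕ) (h : k ≤ n) : Pn n :=
  ⟨Polynomial.C (((Nat.factorial k : ℂ))⁻¹) * Polynomial.X ^ k, by
    rw [Pn, Polynomial.mem_degreeLT]
    exact lt_of_le_of_lt (Polynomial.degree_C_mul_X_pow_le _ _)
      (by exact_mod_cast Nat.lt_succ_of_le h)⟩

/-- The `*`-product of two polynomials of the same degree `m`:
`(f * g)(z) := Σ_{k=0}^{m} g^{(k)}(0) f^{(m-k)}(z)`. -/
noncomputable def starAst (m : ℕ) (f g : Polynomial ℂ) : Polynomial ℂ :=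
  ∑ k ∈ Finset.range (m + 1),
    Polynomial.C ((Polynomial.derivative^[k] g).eval 0) * (Polynomial.derivative^[m - k] f)

/-!
Write `G = ∑ bₖ Dᵏ`. Then `g = G φₙ = ∑ bₖ Dᵏ φₙ`, so the Taylor coefficients of `g`
at `0` are the `bₖ`: `(Dⁿ⁻ᵏ g)(0) = bₖ`. Reversing the order of summation in the
`*`-product therefore gives `f * Dⁿ⁻ᵐ g = ∑_{k ≤ m} bₖ Dᵏ f`, which is `G f` because
`Dᵏ f = 0` for `k > m`. Finally `G f = G F φₙ = F G φₙ`, since all operators in `𝒟(Pₙ)`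
are polynomials in `D` and commute.
-/

open Finset
open scoped Nat

section

variable {K : Type*} [Field K] [CharZero K]

theorem eval_zero_iterate_derivative_inv_factorial_mul_X_pow (n s : ℕ) :
    (derivative^[s] (C ((n ! : K)⁻¹) * X ^ n)).eval 0 = if s = n then 1 else 0 := by
  rw [← coeff_zero_eq_eval_zero, coeff_iterate_derivative, zero_add, coeff_C_mul_X_pow]
  split_ifs with h
  · rw [h, Nat.descFactorial_self, nsmul_eq_mul, mul_inv_cancel₀ (mod_cast n.factorial_ne_zero)]
  · rw [smul_zero]

theorem eval_zero_iterate_derivative_sum_iterate_derivative_inv_factorial_mul_X_pow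
    (b : ℕ → K) {n s : ℕ} (hs : s ≤ n) :
    (derivative^[s] (∑ k ∈ range (n + 1),
      C (b k) * derivative^[k] (C ((n ! : K)⁻¹) * X ^ n))).eval 0 = b (n - s) := by
  have summand (k : ℕ) :
      (derivative^[s] (C (b k) * derivative^[k] (C ((n ! : K)⁻¹) * X ^ n))).eval 0 =
        b k * if s + k = n then 1 else 0 := by
    rw [iterate_derivative_C_mul, eval_mul, eval_C, ← Function.iterate_add_apply,
      eval_zero_iterate_derivative_inv_factorial_mul_X_pow]
  rw [iterate_derivative_sum, eval_finsetSum, sum_eq_single (n - s)]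
  · rw [summand, if_pos (by omega), mul_one]
  · intro k _ hk
    rw [summand, if_neg (by omega), mul_zero]
  · exact fun h => absurd (mem_range.mpr (by omega)) h

end

theorem sum_C_mul_iterate_derivative_range_eq_of_natDegree_le {R : Type*} [Semiring R]
    (c : ℕ → R) {f : R[X]} {m n : ℕ} (hf : f.natDegree ≤ m) (hmn : m ≤ n) :
    ∑ k ∈ range (m + 1), C (c k) * derivative^[k] f =
      ∑ k ∈ range (n + 1), C (c k) * derivative^[k] f := by
  refine sum_subset (range_subset_range.mpr (by omega)) fun k _ hk => ?_
  rw [mem_range, not_lt] at hk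
  rw [iterate_derivative_eq_zero (by omega), mul_zero]

theorem starAst_eq_sum_range (m : ℕ) (f h : ℂ[X]) :
    starAst m f h =
      ∑ k ∈ range (m + 1), C ((derivative^[m - k] h).eval 0) * derivative^[k] f := by
  rw [starAst, ← sum_range_reflect]
  refine sum_congr rfl fun k hk => ?_
  rw [mem_range] at hk
  rw [show m + 1 - 1 - k = m - k by omega, show m - (m - k) = k by omega]

namespace Pn

variable {n : ℕ}

theorem coe_Dop_pow_apply (k : ℕ) (p : Pn n) :
    (((Dop n ^ k) p : Pn n) : ℂ[X]) = derivative^[k] (p : ℂ[X]) := by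
  induction k with
  | zero => rfl
  | succ k ih =>
    rw [pow_succ', Module.End.mul_apply, Function.iterate_succ_apply', ← ih]
    rfl

theorem calD_le_adjoin_Dop : calD n ≤ Subalgebra.toSubmodule (Algebra.adjoin ℂ {Dop n}) :=
  Submodule.span_le.mpr <| Set.range_subset_iff.mpr fun _ =>
    Subalgebra.pow_mem _ (Algebra.self_mem_adjoin_singleton ℂ _) _

theorem commute_of_mem_calD {F G : Module.End ℂ (Pn n)} (hF : F ∈ calD n) (hG : G ∈ calD n) :
    Commute F G :=
  Algebra.commute_of_mem_adjoin_singleton_of_commute (calD_le_adjoin_Dop hG)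
    (Algebra.commute_of_mem_adjoin_self (calD_le_adjoin_Dop hF)).symm

theorem exists_coe_apply_eq_sum_of_mem_calD {T : Module.End ℂ (Pn n)} (hT : T ∈ calD n) :
    ∃ b : ℕ → ℂ, ∀ p : Pn n,
      (T p : ℂ[X]) = ∑ k ∈ range (n + 1), C (b k) * derivative^[k] (p : ℂ[X]) := by
  obtain ⟨a, rfl⟩ := (Submodule.mem_span_range_iff_exists_fun ℂ).mp hT
  refine ⟨fun k => if h : k < n + 1 then a ⟨k, h⟩ else 0, fun p => ?_⟩
  rw [← Fin.sum_univ_eq_sum_range, LinearMap.sum_apply, Submodule.coe_sum]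
  refine sum_congr rfl fun k _ => ?_
  beta_reduce
  rw [dif_pos k.is_lt, LinearMap.smul_apply, Submodule.coe_smul, coe_Dop_pow_apply, smul_eq_C_mul]

end Pn

/-- `(F * G) φ_n` is the paper's `f ⋆ g`, as `F φ_n = f` and `G φ_n = g`. -/
theorem ast_iterate_deriv_eq_star_general (n : ℕ) (m : ℕ)
    (F G : Module.End ℂ (Pn n)) (hF : F ∈ calD n) (hG : G ∈ calD n)
    (f g : Pn n) (hFf : F (phiP n n le_rfl) = f) (hGg : G (phiP n n le_rfl) = g)
    (hdegf : (f : Polynomial ℂ).degree = (m : ℕ)) :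
    starAst m (f : Polynomial ℂ) (Polynomial.derivative^[n - m] (g : Polynomial ℂ)) =
      (((F * G) (phiP n n le_rfl) : Pn n) : Polynomial ℂ) := by
  obtain ⟨b, hb⟩ := Pn.exists_coe_apply_eq_sum_of_mem_calD hG
  have hmn : m ≤ n := by
    have := hdegf ▸ mem_degreeLT.mp f.2
    exact Nat.lt_succ_iff.mp (mod_cast this)
  have hg : (g : ℂ[X]) =
      ∑ k ∈ range (n + 1), C (b k) * derivative^[k] (C ((n ! : ℂ)⁻¹) * X ^ n) :=
    hGg ▸ hb (phiP n n le_rfl)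
  calc starAst m f (derivative^[n - m] g)
      = ∑ k ∈ range (m + 1), C (b k) * derivative^[k] (f : ℂ[X]) := by
        rw [starAst_eq_sum_range]
        refine sum_congr rfl fun k hk => ?_
        rw [mem_range] at hk
        rw [← Function.iterate_add_apply, hg,
          eval_zero_iterate_derivative_sum_iterate_derivative_inv_factorial_mul_X_pow b
            (by omega), show n - (m - k + (n - m)) = k by omega]
    _ = ∑ k ∈ range (n + 1), C (b k) * derivative^[k] (f : ℂ[X]) :=
        sum_C_mul_iterate_derivative_range_eq_of_natDegree_le b
          (natDegree_le_of_degree_le hdegf.le) hmn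
    _ = (((F * G) (phiP n n le_rfl) : Pn n) : ℂ[X]) := by
        rw [(Pn.commute_of_mem_calD hF hG).eq, Module.End.mul_apply, hFf, hb]

/-- For `f, g ∈ P_n` with `deg f = m > 0` and `deg g = n`:
`f * (D^{n-m} g) = f ⋆ g`, where `f ⋆ g = (F * G) φ_n` with `F, G ∈ 𝒟(P_n)`
satisfying `Fφ_n = f`, `Gφ_n = g`. -/
theorem ast_iterate_deriv_eq_star (n : ℕ) (hn : 0 < n) (m : ℕ) (hm : 0 < m)
    (F G : Module.End ℂ (Pn n)) (hF : F ∈ calD n) (hG : G ∈ calD n)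
    (f g : Pn n) (hFf : F (phiP n n le_rfl) = f) (hGg : G (phiP n n le_rfl) = g)
    (hdegf : (f : Polynomial ℂ).degree = (m : ℕ))
    (hdegg : (g : Polynomial ℂ).degree = (n : ℕ)) :
    starAst m (f : Polynomial ℂ) (Polynomial.derivative^[n - m] (g : Polynomial ℂ)) =
      (((F * G) (phiP n n le_rfl) : Pn n) : Polynomial ℂ) :=
  ast_iterate_deriv_eq_star_general n m F G hF hG f g hFf hGg hdegf
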